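/- Let p be a probability distribution on Y = V^L, let γ > 0 with γ ≠ 1, and let p^γ be the temperature-scaled distribution of p. Then p^γ = p (equivalently, KL(p ∥ p^γ) = 0) if and only if for every j ∈ {0, …, L−1} and every prefix w ∈ V^j with positive p-probability, all nonzero conditional next-token probabilities p(v|w), v ∈ V, are equal—i.e., every conditional next-token distribution of p is uniform on its support (which includes the deterministic case). In particular, for γ ≠ 1, temperature-scaled random sampling is cross-entropy optimal only for such distributions. -/
import Mathlib


/- prefixProb p w = P_{z∼p}(w is a prefix of z), for a distribution p on Y = V^L. -/
open Classical in
noncomputable def prefixProb {V : Type*} [Fintype V] {L : ℕ}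
    (p : (Fin L → V) → ℝ) (w : List V) : ℝ :=
  ∑ y : Fin L → V, if w <+: List.ofFn y then p y else 0

/- condProb p w t = p(t | w) = P(w·t prefix) / P(w prefix). -/
noncomputable def condProb {V : Type*} [Fintype V] {L : ℕ}
    (p : (Fin L → V) → ℝ) (w t : List V) : ℝ :=
  prefixProb p (w ++ t) / prefixProb p w

/- The temperature-scaled distribution p^γ on Y = V^L:
p^γ(y) = Π_{i=1}^{L} p(y_i | y_{[i-1]})^γ / Σ_{v∈V} p(v | y_{[i-1]})^γ,
taken to be 0 if some prefix y_{[i-1]} has p-probability 0. -/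
open Classical in
noncomputable def tempScaled {V : Type*} [Fintype V] {L : ℕ}
    (p : (Fin L → V) → ℝ) (γ : ℝ) (y : Fin L → V) : ℝ :=
  ∏ i : Fin L,
    (if prefixProb p ((List.ofFn y).take i) = 0 then 0
     else (condProb p ((List.ofFn y).take i) [y i]) ^ γ /
          ∑ v : V, (condProb p ((List.ofFn y).take i) [v]) ^ γ)

namespace Stmt12Aux

variable {V : Type*} [Fintype V] {L : ℕ}

lemma prefixProb_nonneg (p : (Fin L → V) → ℝ) (hp0 : ∀ y, 0 ≤ p y) (w : List V) :
    0 ≤ prefixProb p w := by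
  unfold prefixProb
  apply Finset.sum_nonneg
  intro y _
  split <;> simp [hp0 y]

lemma prefixProb_nil (p : (Fin L → V) → ℝ) (hp1 : ∑ y, p y = 1) :
    prefixProb p ([] : List V) = 1 := by
  unfold prefixProb
  simpa [List.nil_prefix] using hp1

lemma prefixProb_ofFn (p : (Fin L → V) → ℝ) (y : Fin L → V) :
    prefixProb p (List.ofFn y) = p y := by
  classical
  unfold prefixProb
  have key : ∀ z : Fin L → V, (List.ofFn y <+: List.ofFn z) ↔ y = z := by
    intro z
    constructor
    · intro h
      exact List.ofFn_inj.mp (h.eq_of_length (by simp))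
    · rintro rfl; exact List.prefix_refl _
  simp only [key]
  simp

lemma prefixProb_mono (p : (Fin L → V) → ℝ) (hp0 : ∀ y, 0 ≤ p y) {w w' : List V}
    (h : w <+: w') : prefixProb p w' ≤ prefixProb p w := by
  unfold prefixProb
  apply Finset.sum_le_sum
  intro y _
  split_ifs with h1 h2
  · exact le_rfl
  · exact absurd (h.trans h1) h2
  · exact hp0 y
  · exact le_rfl

open Classical in
lemma sum_if_concat (w l : List V) (h : w.length < l.length) (a : ℝ) :
    ∑ v : V, (if w ++ [v] <+: l then a else 0) = if w <+: l then a else 0 := by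
  classical
  by_cases hw : w <+: l
  · obtain ⟨t, rfl⟩ := hw
    rw [if_pos (List.prefix_append w t)]
    cases t with
    | nil => simp at h
    | cons c t' =>
      have key : ∀ v : V, (w ++ [v] <+: w ++ c :: t') ↔ v = c := by
        intro v
        rw [List.prefix_append_right_inj, List.cons_prefix_cons]
        simp
      simp only [key]
      simp
  · rw [if_neg hw]
    apply Finset.sum_eq_zero
    intro v _
    rw [if_neg]
    intro hv
    exact hw ((List.prefix_append w [v]).trans hv)

lemma prefixProb_succ (p : (Fin L → V) → ℝ) {w : List V} (h : w.length < L) :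
    prefixProb p w = ∑ v : V, prefixProb p (w ++ [v]) := by
  symm
  unfold prefixProb
  rw [Finset.sum_comm]
  exact Finset.sum_congr rfl fun y _ => sum_if_concat w (List.ofFn y) (by simpa using h) (p y)

lemma condProb_nonneg (p : (Fin L → V) → ℝ) (hp0 : ∀ y, 0 ≤ p y) (w t : List V) :
    0 ≤ condProb p w t :=
  div_nonneg (prefixProb_nonneg p hp0 _) (prefixProb_nonneg p hp0 _)

lemma sum_condProb (p : (Fin L → V) → ℝ) {w : List V} (hlen : w.length < L)
    (hw : 0 < prefixProb p w) : ∑ v : V, condProb p w [v] = 1 := by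
  unfold condProb
  rw [← Finset.sum_div, ← prefixProb_succ p hlen, div_self hw.ne']

lemma exists_pos_condProb [Nonempty V] (p : (Fin L → V) → ℝ) (hp0 : ∀ y, 0 ≤ p y)
    {w : List V} (hlen : w.length < L) (hw : 0 < prefixProb p w) :
    ∃ v : V, 0 < condProb p w [v] := by
  by_contra hc
  push_neg at hc
  have h0 : ∑ v : V, condProb p w [v] = 0 :=
    Finset.sum_eq_zero fun v _ => le_antisymm (hc v) (condProb_nonneg p hp0 _ _)
  rw [sum_condProb p hlen hw] at h0
  norm_num at h0

lemma Z_pos [Nonempty V] (p : (Fin L → V) → ℝ) (hp0 : ∀ y, 0 ≤ p y) {γ : ℝ}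
    {w : List V} (hlen : w.length < L) (hw : 0 < prefixProb p w) :
    0 < ∑ u : V, condProb p w [u] ^ γ := by
  obtain ⟨v, hv⟩ := exists_pos_condProb p hp0 hlen hw
  apply Finset.sum_pos'
  · exact fun u _ => Real.rpow_nonneg (condProb_nonneg p hp0 _ _) _
  · exact ⟨v, Finset.mem_univ v, Real.rpow_pos_of_pos hv _⟩

open Classical in
noncomputable def f (p : (Fin L → V) → ℝ) (γ : ℝ) (w : List V) (v : V) : ℝ :=
  if prefixProb p w = 0 then 0
  else condProb p w [v] ^ γ / ∑ u : V, condProb p w [u] ^ γ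

lemma f_sum [Nonempty V] (p : (Fin L → V) → ℝ) (hp0 : ∀ y, 0 ≤ p y) {γ : ℝ}
    {w : List V} (hlen : w.length < L) (hw : 0 < prefixProb p w) :
    ∑ v : V, f p γ w v = 1 := by
  have hZ := Z_pos p hp0 (γ := γ) hlen hw
  simp only [f, if_neg hw.ne']
  rw [← Finset.sum_div, div_self hZ.ne']

lemma f_zero_of_ext (p : (Fin L → V) → ℝ) {γ : ℝ} (hγ : 0 < γ) {w : List V} {v : V}
    (hw : prefixProb p w ≠ 0) (hv : prefixProb p (w ++ [v]) = 0) : f p γ w v = 0 := by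
  rw [f, if_neg hw]
  unfold condProb
  rw [hv, zero_div, Real.zero_rpow hγ.ne', zero_div]

open Classical in
noncomputable def G [Nonempty V] (p : (Fin L → V) → ℝ) (γ : ℝ) (w : List V) : ℝ :=
  ∏ i ∈ Finset.range w.length, f p γ (w.take i) (w.getD i (Classical.arbitrary V))

lemma G_concat [Nonempty V] (p : (Fin L → V) → ℝ) (γ : ℝ) (w : List V) (v : V) :
    G p γ (w ++ [v]) = G p γ w * f p γ w v := by
  unfold G
  rw [List.length_append, List.length_singleton, Finset.prod_range_succ]
  congr 1
  · apply Finset.prod_congr rfl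
    intro i hi
    have hi' : i < w.length := Finset.mem_range.mp hi
    rw [List.take_append_of_le_length hi'.le, List.getD_append _ _ _ _ hi']
  · rw [List.take_append_of_le_length le_rfl, List.take_length,
      List.getD_append_right _ _ _ _ le_rfl]
    simp

lemma tempScaled_eq_G [Nonempty V] (p : (Fin L → V) → ℝ) (γ : ℝ) (y : Fin L → V) :
    tempScaled p γ y = G p γ (List.ofFn y) := by
  have h0 : tempScaled p γ y = ∏ i : Fin L, f p γ ((List.ofFn y).take i) (y i) := by
    unfold tempScaled f
    rfl
  rw [h0]
  unfold G
  rw [List.length_ofFn, ← Fin.prod_univ_eq_prod_range]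
  apply Finset.prod_congr rfl
  intro i _
  congr 1
  rw [List.getD_eq_getElem _ _ (by simp [i.isLt]), List.getElem_ofFn]

lemma G_eq_zero [Nonempty V] (p : (Fin L → V) → ℝ) (hp0 : ∀ y, 0 ≤ p y)
    (hp1 : ∑ y, p y = 1) {γ : ℝ} (hγ : 0 < γ) :
    ∀ w : List V, prefixProb p w = 0 → G p γ w = 0 := by
  intro w
  induction w using List.reverseRecOn with
  | nil => intro h; rw [prefixProb_nil p hp1] at h; norm_num at h
  | append_singleton w v ih =>
    intro h
    rw [G_concat]
    by_cases hw : prefixProb p w = 0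
    · rw [ih hw, zero_mul]
    · rw [f_zero_of_ext p hγ hw h, mul_zero]

lemma prefixProb_tempScaled [Nonempty V] (p : (Fin L → V) → ℝ) (hp0 : ∀ y, 0 ≤ p y)
    (hp1 : ∑ y, p y = 1) {γ : ℝ} (hγ : 0 < γ) :
    ∀ k : ℕ, ∀ w : List V, w.length + k = L →
      prefixProb (tempScaled p γ) w = G p γ w := by
  intro k
  induction k with
  | zero =>
    intro w hw
    rw [Nat.add_zero] at hw
    subst hw
    calc prefixProb (tempScaled p γ) w
        = prefixProb (tempScaled p γ) (List.ofFn w.get) := by rw [List.ofFn_get]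
      _ = tempScaled p γ w.get := prefixProb_ofFn _ _
      _ = G p γ (List.ofFn w.get) := tempScaled_eq_G p γ w.get
      _ = G p γ w := by rw [List.ofFn_get]
  | succ k ih =>
    intro w hw
    have hlen : w.length < L := by omega
    rw [prefixProb_succ _ hlen]
    have key : ∀ v : V, prefixProb (tempScaled p γ) (w ++ [v]) = G p γ w * f p γ w v := by
      intro v
      rw [ih (w ++ [v]) (by simp; omega), G_concat]
    simp only [key, ← Finset.mul_sum]
    by_cases hw0 : prefixProb p w = 0
    · rw [G_eq_zero p hp0 hp1 hγ w hw0, zero_mul]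
    · have hwpos : 0 < prefixProb p w :=
        lt_of_le_of_ne (prefixProb_nonneg p hp0 w) (Ne.symm hw0)
      rw [f_sum p hp0 hlen hwpos, mul_one]

lemma prod_telescope (F : ℕ → ℝ) (n : ℕ) (h : ∀ i < n, F i ≠ 0) :
    (∏ i ∈ Finset.range n, (F (i + 1) / F i)) * F 0 = F n := by
  induction n with
  | zero => simp
  | succ n ih =>
    have hFn : F n ≠ 0 := h n (by omega)
    rw [Finset.prod_range_succ, mul_right_comm, ih (fun i hi => h i (by omega)),
      mul_comm, div_mul_cancel₀ _ hFn]

lemma chain_rule (p : (Fin L → V) → ℝ) (hp1 : ∑ y, p y = 1) (y : Fin L → V)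
    (hpos : ∀ i : Fin L, prefixProb p ((List.ofFn y).take i) ≠ 0) :
    ∏ i : Fin L, condProb p ((List.ofFn y).take i) [y i] = p y := by
  have hconcat : ∀ i : Fin L, (List.ofFn y).take i ++ [y i] = (List.ofFn y).take (i + 1) := by
    intro i
    rw [List.take_succ]
    congr 1
    simp [List.getElem?_eq_getElem, i.isLt]
  have hfac : ∀ i : Fin L, condProb p ((List.ofFn y).take i) [y i] =
      prefixProb p ((List.ofFn y).take (i + 1)) / prefixProb p ((List.ofFn y).take i) := by
    intro i
    unfold condProb
    rw [hconcat i]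
  calc ∏ i : Fin L, condProb p ((List.ofFn y).take i) [y i]
      = ∏ i ∈ Finset.range L, (prefixProb p ((List.ofFn y).take (i + 1)) /
          prefixProb p ((List.ofFn y).take i)) := by
        rw [← Fin.prod_univ_eq_prod_range]
        exact Finset.prod_congr rfl fun i _ => hfac i
    _ = (∏ i ∈ Finset.range L, (prefixProb p ((List.ofFn y).take (i + 1)) /
          prefixProb p ((List.ofFn y).take i))) * prefixProb p ((List.ofFn y).take 0) := by
        rw [List.take_zero, prefixProb_nil p hp1, mul_one]
    _ = prefixProb p ((List.ofFn y).take L) :=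
        prod_telescope (fun j => prefixProb p ((List.ofFn y).take j)) L
          (fun i hi => hpos ⟨i, hi⟩)
    _ = p y := by
        rw [List.take_of_length_le (by simp), prefixProb_ofFn]

lemma f_eq_condProb_of_uniform [Nonempty V] (p : (Fin L → V) → ℝ) (hp0 : ∀ y, 0 ≤ p y)
    {γ : ℝ} (hγ : 0 < γ) {w : List V} (hlen : w.length < L) (hw : 0 < prefixProb p w)
    (hunif : ∀ u v : V, 0 < condProb p w [u] → 0 < condProb p w [v] →
      condProb p w [u] = condProb p w [v]) :
    ∀ v : V, f p γ w v = condProb p w [v] := by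
  obtain ⟨v₀, hv₀⟩ := exists_pos_condProb p hp0 hlen hw
  set c := condProb p w [v₀] with hc_def
  have hc : 0 < c := hv₀
  have hq : ∀ v : V, condProb p w [v] = 0 ∨ condProb p w [v] = c := by
    intro v
    rcases (condProb_nonneg p hp0 w [v]).lt_or_eq with h | h
    · exact Or.inr (hunif v v₀ h hv₀)
    · exact Or.inl h.symm
  have hpow : ∀ v : V, condProb p w [v] ^ γ = condProb p w [v] * c ^ (γ - 1) := by
    intro v
    rcases hq v with h0 | hcv
    · rw [h0, Real.zero_rpow hγ.ne', zero_mul]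
    · rw [hcv, show γ = 1 + (γ - 1) by ring, Real.rpow_add hc, Real.rpow_one]
      ring_nf
  have hZ : (∑ u : V, condProb p w [u] ^ γ) = c ^ (γ - 1) := by
    simp only [hpow]
    rw [← Finset.sum_mul, sum_condProb p hlen hw, one_mul]
  intro v
  rw [f, if_neg hw.ne', hZ, hpow v,
    mul_div_cancel_right₀ _ (Real.rpow_pos_of_pos hc _).ne']

end Stmt12Aux

open Stmt12Aux

/- STATEMENT 12: for γ > 0, γ ≠ 1, the temperature-scaled distribution p^γ equals p iff
every conditional next-token distribution of p is uniform on its support, i.e. for every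
prefix w of length < L with positive p-probability, all nonzero conditionals p(v|w) are
equal (including the deterministic case). -/
theorem stmt12 {V : Type*} [Fintype V] [Nonempty V] {L : ℕ} (hL : 1 ≤ L)
    (p : (Fin L → V) → ℝ) (hp0 : ∀ y, 0 ≤ p y) (hp1 : ∑ y, p y = 1)
    (γ : ℝ) (hγ : 0 < γ) (hγ1 : γ ≠ 1) :
    (∀ y : Fin L → V, tempScaled p γ y = p y) ↔
    (∀ w : List V, w.length < L → 0 < prefixProb p w →
      ∀ u v : V, 0 < condProb p w [u] → 0 < condProb p w [v] →
        condProb p w [u] = condProb p w [v]) := by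
  constructor
  · intro h w hlen hw u v hu hv
    have hfun : tempScaled p γ = p := funext h
    have hts : ∀ w' : List V, w'.length ≤ L → prefixProb p w' = G p γ w' := by
      intro w' hw'
      have h1 := prefixProb_tempScaled p hp0 hp1 hγ (L - w'.length) w' (by omega)
      rwa [hfun] at h1
    have key : ∀ t : V, condProb p w [t] = f p γ w t := by
      intro t
      have h1 : prefixProb p (w ++ [t]) = prefixProb p w * f p γ w t := by
        rw [hts (w ++ [t]) (by simp; omega), G_concat, ← hts w hlen.le]
      unfold condProb
      rw [h1]
      exact mul_div_cancel_left₀ _ hw.ne'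
    have hZ : 0 < ∑ u : V, condProb p w [u] ^ γ := Z_pos p hp0 hlen hw
    have hq : ∀ t : V, 0 < condProb p w [t] →
        condProb p w [t] ^ (γ - 1) = ∑ u : V, condProb p w [u] ^ γ := by
      intro t ht
      have h2 := key t
      rw [f, if_neg hw.ne'] at h2
      have h3 : condProb p w [t] ^ γ = (∑ u : V, condProb p w [u] ^ γ) * condProb p w [t] := by
        field_simp at h2
        linarith [h2]
      rw [Real.rpow_sub ht, Real.rpow_one, h3,
        mul_div_cancel_right₀ _ ht.ne']
    have h4 : (γ - 1) * Real.log (condProb p w [u]) =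
        (γ - 1) * Real.log (condProb p w [v]) := by
      rw [← Real.log_rpow hu, ← Real.log_rpow hv, hq u hu, hq v hv]
    have h5 : Real.log (condProb p w [u]) = Real.log (condProb p w [v]) :=
      mul_left_cancel₀ (sub_ne_zero.mpr hγ1) h4
    rw [← Real.exp_log hu, ← Real.exp_log hv, h5]
  · intro H y
    by_cases hz : ∃ i : Fin L, prefixProb p ((List.ofFn y).take i) = 0
    · obtain ⟨i, hi⟩ := hz
      have ht : tempScaled p γ y = 0 := by
        unfold tempScaled
        exact Finset.prod_eq_zero (Finset.mem_univ i) (by rw [if_pos hi])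
      have h1 : prefixProb p (List.ofFn y) ≤ prefixProb p ((List.ofFn y).take i) :=
        prefixProb_mono p hp0 (List.take_prefix _ _)
      rw [prefixProb_ofFn, hi] at h1
      have h2 : p y = 0 := le_antisymm h1 (hp0 y)
      rw [ht, h2]
    · push_neg at hz
      have hlen : ∀ i : Fin L, ((List.ofFn y).take i).length < L := by
        intro i
        simp [i.isLt]
      have hpos : ∀ i : Fin L, 0 < prefixProb p ((List.ofFn y).take i) := fun i =>
        lt_of_le_of_ne (prefixProb_nonneg p hp0 _) (Ne.symm (hz i))
      have h0 : tempScaled p γ y = ∏ i : Fin L, f p γ ((List.ofFn y).take i) (y i) := by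
        unfold tempScaled f
        rfl
      rw [h0]
      rw [Finset.prod_congr rfl fun i _ =>
        f_eq_condProb_of_uniform p hp0 hγ (hlen i) (hpos i) (H _ (hlen i) (hpos i)) (y i)]
      exact chain_rule p hp1 y (fun i => (hpos i).ne')
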